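/- arXiv:math/0609753 — 2 statements merged into one kernel-verified Lean document; each statement's English description precedes it below -/
import Mathlib

section
/- Let ψ : ℝ² → ℝ² be defined by ψ(X,Y) = (X² − Y, 2XY). Then the restriction of ψ to the open upper half-plane {(X,Y) : Y > 0} is injective, its image is exactly ℝ² ∖ {(t,0) : t ≥ 0} (the complement of the nonnegative horizontal axis), and it is a smooth (C^∞) diffeomorphism from the open upper half-plane onto this open set. -/
/-- The fold map `ψ(X,Y) = (X² − Y, 2XY)`, the local model for the extended moment map
of a toric near-symplectic 4-manifold near a fold point. -/
noncomputable def psi : ℝ × ℝ → ℝ × ℝ := fun p => (p.1 ^ 2 - p.2, 2 * p.1 * p.2)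

/-- The open upper half-plane `{(X,Y) : Y > 0}`. -/
def upperHalfPlane' : Set (ℝ × ℝ) := {p | 0 < p.2}

/-- The complement of the nonnegative horizontal axis `ℝ² ∖ {(t,0) : t ≥ 0}`. -/
def slitPlane' : Set (ℝ × ℝ) := {q | ¬ ∃ t : ℝ, 0 ≤ t ∧ q = (t, 0)}

lemma psi_contDiff : ContDiff ℝ (⊤ : ℕ∞) psi := by
  unfold psi
  exact ContDiff.prodMk ((contDiff_fst.pow 2).sub contDiff_snd)
    ((contDiff_const.mul contDiff_fst).mul contDiff_snd)

lemma upperHalfPlane'_isOpen : IsOpen upperHalfPlane' :=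
  isOpen_lt continuous_const continuous_snd

lemma slitPlane'_isOpen : IsOpen slitPlane' := by
  have : slitPlane' = ({q : ℝ × ℝ | 0 ≤ q.1 ∧ q.2 = 0})ᶜ := by
    ext q
    simp only [slitPlane', Set.mem_setOf_eq, Set.mem_compl_iff, Prod.ext_iff, not_exists]
    constructor
    · rintro h ⟨h1, h2⟩
      exact h q.1 ⟨h1, rfl, h2⟩
    · rintro h t ⟨ht, h1, h2⟩
      exact h ⟨h1 ▸ ht, h2⟩
  rw [this]
  exact ((isClosed_le continuous_const continuous_fst).inter
    (isClosed_eq continuous_snd continuous_const)).isOpen_compl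

lemma psi_injOn : Set.InjOn psi upperHalfPlane' := by
  rintro ⟨x1, y1⟩ h1 ⟨x2, y2⟩ h2 heq
  simp only [upperHalfPlane', Set.mem_setOf_eq] at h1 h2
  simp only [psi, Prod.mk.injEq] at heq
  obtain ⟨e1, e2⟩ := heq
  have key : (x1 - x2) * (y1 + y2 + (x1 + x2) ^ 2) = 0 := by
    linear_combination (x1 + x2) * e1 + e2
  have hpos : 0 < y1 + y2 + (x1 + x2) ^ 2 := by positivity
  have hx : x1 = x2 := by
    rcases mul_eq_zero.1 key with h | h
    · linarith
    · linarith
  have hy : y1 = y2 := by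
    rw [hx] at e1; linarith
  simp [hx, hy]

lemma exists_root (a b : ℝ) (hb : 0 < b) : ∃ X : ℝ, a < X ^ 2 ∧ 2 * X ^ 3 - 2 * a * X = b := by
  set c : ℝ := Real.sqrt (max a 0) with hcdef
  have hc0 : 0 ≤ c := Real.sqrt_nonneg _
  have hc2 : c ^ 2 = max a 0 := Real.sq_sqrt (le_max_right a 0)
  have hca : a ≤ c ^ 2 := by rw [hc2]; exact le_max_left a 0
  have hfc : 2 * c ^ 3 - 2 * a * c = 0 := by
    rcases le_or_gt a 0 with h | h
    · have : c = 0 := by rw [hcdef, max_eq_right h, Real.sqrt_zero]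
      simp [this]
    · have h2 : c ^ 2 = a := by rw [hc2, max_eq_left h.le]
      nlinarith [h2]
  set d : ℝ := c + b + 1 with hddef
  have hcd : c ≤ d := by nlinarith
  have hd1 : b + 1 ≤ d := by nlinarith
  have hfd : b ≤ 2 * d ^ 3 - 2 * a * d := by
    have hd2 : (b + 1) ^ 2 ≤ d ^ 2 - a := by nlinarith
    have h3 : 2 * (b + 1) * (b + 1) ^ 2 ≤ 2 * d * (d ^ 2 - a) := by nlinarith
    nlinarith
  have hcont : ContinuousOn (fun X : ℝ => 2 * X ^ 3 - 2 * a * X) (Set.Icc c d) := by fun_prop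
  have hmem : b ∈ Set.Icc (2 * c ^ 3 - 2 * a * c) (2 * d ^ 3 - 2 * a * d) := by
    rw [hfc]; exact ⟨hb.le, hfd⟩
  obtain ⟨X, hX, hfX⟩ := intermediate_value_Icc hcd hcont hmem
  simp only at hfX
  refine ⟨X, ?_, hfX⟩
  have hX0 : 0 ≤ X := le_trans hc0 hX.1
  by_contra h
  push_neg at h
  nlinarith [mul_nonneg hX0 (sub_nonneg.2 h)]

lemma psi_image_subset : psi '' upperHalfPlane' ⊆ slitPlane' := by
  rintro q ⟨⟨X, Y⟩, hY, rfl⟩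
  simp only [upperHalfPlane', Set.mem_setOf_eq] at hY
  rintro ⟨t, ht, heq⟩
  simp only [psi, Prod.mk.injEq] at heq
  obtain ⟨h1, h2⟩ := heq
  have hX : X = 0 := by
    have h2' : X * Y = 0 := by linarith
    rcases mul_eq_zero.1 h2' with h | h
    · exact h
    · linarith
  rw [hX] at h1
  simp at h1
  linarith

lemma psi_surj : slitPlane' ⊆ psi '' upperHalfPlane' := by
  rintro ⟨a, b⟩ hq
  simp only [slitPlane', Set.mem_setOf_eq, not_exists] at hq
  rcases lt_trichotomy b 0 with hb | hb | hb
  · obtain ⟨X, hX2, hX⟩ := exists_root a (-b) (by linarith)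
    refine ⟨(-X, X ^ 2 - a), by simpa [upperHalfPlane'] using hX2, ?_⟩
    simp only [psi, Prod.mk.injEq]
    constructor <;> ring_nf <;> nlinarith [hX]
  · subst hb
    have ha : a < 0 := by
      by_contra h
      push_neg at h
      exact hq a ⟨h, rfl⟩
    refine ⟨(0, -a), by simpa [upperHalfPlane'] using ha, ?_⟩
    simp [psi]
  · obtain ⟨X, hX2, hX⟩ := exists_root a b hb
    refine ⟨(X, X ^ 2 - a), by simpa [upperHalfPlane'] using hX2, ?_⟩
    simp only [psi, Prod.mk.injEq]
    constructor <;> ring_nf <;> nlinarith [hX]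

/-- The derivative of `psi` at a point with `4X² + 2Y ≠ 0`, as a continuous linear equiv. -/
noncomputable def dpsi (X Y : ℝ) (h : 4 * X ^ 2 + 2 * Y ≠ 0) : (ℝ × ℝ) ≃L[ℝ] (ℝ × ℝ) :=
  LinearEquiv.toContinuousLinearEquiv
  { toFun := fun v => (2 * X * v.1 - v.2, 2 * Y * v.1 + 2 * X * v.2)
    invFun := fun w => ((2 * X * w.1 + w.2) / (4 * X ^ 2 + 2 * Y),
      (-(2 * Y) * w.1 + 2 * X * w.2) / (4 * X ^ 2 + 2 * Y))
    map_add' := by intro v w; simp only [Prod.fst_add, Prod.snd_add, Prod.mk_add_mk,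
      Prod.mk.injEq]; constructor <;> ring
    map_smul' := by intro c v; simp only [Prod.smul_fst, Prod.smul_snd, Prod.smul_mk,
      smul_eq_mul, RingHom.id_apply, Prod.mk.injEq]; constructor <;> ring
    left_inv := by
      intro v
      rw [Prod.ext_iff]
      dsimp only
      constructor
      · linear_combination v.1 * mul_inv_cancel₀ h
      · linear_combination v.2 * mul_inv_cancel₀ h
    right_inv := by
      intro w
      rw [Prod.ext_iff]
      dsimp only
      constructor
      · linear_combination w.1 * mul_inv_cancel₀ h
      · linear_combination w.2 * mul_inv_cancel₀ h }

lemma psi_hasFDerivAt (X Y : ℝ) (h : 4 * X ^ 2 + 2 * Y ≠ 0) :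
    HasFDerivAt psi ((dpsi X Y h : (ℝ × ℝ) →L[ℝ] (ℝ × ℝ))) (X, Y) := by
  have h1 : HasFDerivAt (fun p : ℝ × ℝ => p.1 * p.1 - p.2)
      ((X • ContinuousLinearMap.fst ℝ ℝ ℝ + X • ContinuousLinearMap.fst ℝ ℝ ℝ) -
        ContinuousLinearMap.snd ℝ ℝ ℝ) (X, Y) :=
    HasFDerivAt.sub (HasFDerivAt.mul (hasFDerivAt_fst (𝕜 := ℝ) (p := ((X, Y) : ℝ × ℝ)))
      (hasFDerivAt_fst (𝕜 := ℝ) (p := ((X, Y) : ℝ × ℝ))) :) hasFDerivAt_snd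
  have h2 : HasFDerivAt (fun p : ℝ × ℝ => 2 * p.1 * p.2)
      ((2 * X) • ContinuousLinearMap.snd ℝ ℝ ℝ +
        Y • ((2 : ℝ) • ContinuousLinearMap.fst ℝ ℝ ℝ)) (X, Y) :=
    (HasFDerivAt.mul ((hasFDerivAt_fst (𝕜 := ℝ) (p := ((X, Y) : ℝ × ℝ))).const_mul 2)
      (hasFDerivAt_snd (𝕜 := ℝ) (p := ((X, Y) : ℝ × ℝ))) :)
  have hp := h1.prodMk h2
  have hpsi : psi = fun p : ℝ × ℝ => (p.1 * p.1 - p.2, 2 * p.1 * p.2) := by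
    funext p; simp [psi, pow_two]
  have heq : ((dpsi X Y h : (ℝ × ℝ) →L[ℝ] (ℝ × ℝ))) =
      ((X • ContinuousLinearMap.fst ℝ ℝ ℝ + X • ContinuousLinearMap.fst ℝ ℝ ℝ) -
        ContinuousLinearMap.snd ℝ ℝ ℝ).prod
      ((2 * X) • ContinuousLinearMap.snd ℝ ℝ ℝ +
        Y • ((2 : ℝ) • ContinuousLinearMap.fst ℝ ℝ ℝ)) := by
    apply ContinuousLinearMap.ext
    intro v
    simp only [ContinuousLinearMap.prod_apply, ContinuousLinearMap.add_apply,
      ContinuousLinearMap.smul_apply, ContinuousLinearMap.sub_apply,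
      ContinuousLinearMap.coe_fst', ContinuousLinearMap.coe_snd', smul_eq_mul]
    show ((2 * X * v.1 - v.2, 2 * Y * v.1 + 2 * X * v.2) : ℝ × ℝ) = _
    rw [Prod.ext_iff]
    dsimp only
    constructor
    · ring
    · ring
  rw [hpsi, heq]
  exact hp

/-- `ψ` restricted to the open upper half-plane is injective, has image exactly the
complement of the nonnegative horizontal axis (an open set), and is a smooth
diffeomorphism onto this open set. -/
theorem psi_upperHalf_smooth_diffeomorphism :
    Set.InjOn psi upperHalfPlane' ∧
    psi '' upperHalfPlane' = slitPlane' ∧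
    IsOpen slitPlane' ∧
    ContDiffOn ℝ (⊤ : ℕ∞) psi upperHalfPlane' ∧
    ∃ g : ℝ × ℝ → ℝ × ℝ,
      ContDiffOn ℝ (⊤ : ℕ∞) g slitPlane' ∧ g '' slitPlane' = upperHalfPlane' ∧
      (∀ p ∈ upperHalfPlane', g (psi p) = p) ∧
      (∀ q ∈ slitPlane', psi (g q) = q) := by
  have himg : psi '' upperHalfPlane' = slitPlane' :=
    Set.Subset.antisymm psi_image_subset psi_surj
  set g : ℝ × ℝ → ℝ × ℝ := Function.invFunOn psi upperHalfPlane' with hgdef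
  have hex : ∀ q ∈ slitPlane', ∃ p ∈ upperHalfPlane', psi p = q := by
    intro q hq
    obtain ⟨p, hp, hpq⟩ := psi_surj hq
    exact ⟨p, hp, hpq⟩
  have hleft : ∀ p ∈ upperHalfPlane', g (psi p) = p := fun p hp =>
    psi_injOn.leftInvOn_invFunOn hp
  have hright : ∀ q ∈ slitPlane', psi (g q) = q := fun q hq =>
    Function.invFunOn_eq (hex q hq)
  have hgmem : ∀ q ∈ slitPlane', g q ∈ upperHalfPlane' := fun q hq =>
    Function.invFunOn_mem (hex q hq)
  refine ⟨psi_injOn, himg, slitPlane'_isOpen, psi_contDiff.contDiffOn, g, ?_, ?_, hleft, hright⟩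
  · -- smoothness of g on the slit plane
    intro q hq
    obtain ⟨p, hp, rfl⟩ := hex q hq
    obtain ⟨X, Y⟩ := p
    have hY : 0 < Y := hp
    have hne : 4 * X ^ 2 + 2 * Y ≠ 0 := by positivity
    have hfd := psi_hasFDerivAt X Y hne
    have hcd : ContDiffAt ℝ (⊤ : ℕ∞) psi (X, Y) := psi_contDiff.contDiffAt
    have hs : HasStrictFDerivAt psi ((dpsi X Y hne : (ℝ × ℝ) →L[ℝ] (ℝ × ℝ))) (X, Y) :=
      hcd.hasStrictFDerivAt' hfd (by simp)
    set linv := hcd.localInverse hfd (by simp) with hlinv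
    have hlinv_eq : linv = hs.localInverse psi (dpsi X Y hne) (X, Y) := rfl
    have hinv_cd : ContDiffAt ℝ (⊤ : ℕ∞) linv (psi (X, Y)) := hcd.to_localInverse hfd (by simp)
    have hri : ∀ᶠ y in nhds (psi (X, Y)), psi (linv y) = y := by
      rw [hlinv_eq]; exact hs.eventually_right_inverse
    have htend : Filter.Tendsto linv (nhds (psi (X, Y))) (nhds (X, Y)) := by
      rw [hlinv_eq]; exact hs.localInverse_tendsto
    have hmem : ∀ᶠ y in nhds (psi (X, Y)), linv y ∈ upperHalfPlane' :=
      htend (upperHalfPlane'_isOpen.mem_nhds hp)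
    have hev : g =ᶠ[nhds (psi (X, Y))] linv := by
      filter_upwards [hri, hmem] with y h1 h2
      have hex' : ∃ x ∈ upperHalfPlane', psi x = y := ⟨linv y, h2, h1⟩
      exact psi_injOn (Function.invFunOn_mem hex') h2
        (by rw [Function.invFunOn_eq hex', h1])
    exact (hinv_cd.congr_of_eventuallyEq hev).contDiffWithinAt
  · -- g '' slitPlane' = upperHalfPlane'
    apply Set.Subset.antisymm
    · rintro p ⟨q, hq, rfl⟩
      exact hgmem q hq
    · intro p hp
      have hpsi : psi p ∈ slitPlane' := psi_image_subset ⟨p, hp, rfl⟩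
      exact ⟨psi p, hpsi, hleft p hp⟩
end

section
/- Given a right polygonal slope list s₁, …, s_k with k ≥ 2, s₁ = 0 and s₂ = ∞, and a point (x₀, y₀) ∈ ℝ² with x₀ > 0 and y₀ > 0, there exists an embedded right polygonal path with folds in ℝ² that realizes the slope list, has initial endpoint (0,0) and final endpoint (x₀, y₀), and whose first edge has oriented tangent vector (1,0). -/
/-- A slope: a rational number, or `∞` (encoded by `none`). -/
abbrev Slope := Option ℚ

/-- The primitive integral vector `(n, m)` associated to the slope `m/n`
(in lowest terms), with `(0, 1)` for slope `∞`. -/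
def primVec : Slope → ℤ × ℤ
  | none => (0, 1)
  | some q => ((q.den : ℤ), q.num)

/-- The primitive integral vector of a slope, viewed in the plane. -/
noncomputable def primVecR (s : Slope) : ℝ × ℝ :=
  (((primVec s).1 : ℝ), ((primVec s).2 : ℝ))

/-- Cross product (determinant) of two plane vectors. -/
def cross (u v : ℝ × ℝ) : ℝ := u.1 * v.2 - u.2 * v.1

/-- Dot product of two plane vectors. -/
def dotp (u v : ℝ × ℝ) : ℝ := u.1 * v.1 + u.2 * v.2

/-- The determinant of the primitive integral vectors of two slopes. -/
def primDet (s s' : Slope) : ℤ :=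
  (primVec s).1 * (primVec s').2 - (primVec s).2 * (primVec s').1

/-- Euclidean norm of a plane vector. -/
noncomputable def vnorm (u : ℝ × ℝ) : ℝ := Real.sqrt (u.1 ^ 2 + u.2 ^ 2)

/-- The counterclockwise angle from `u` to `w`; when `cross u w > 0` (as at the
vertices of a right polygonal path) this is the counterclockwise turning angle,
lying in `(0, π)`. -/
noncomputable def turnAngle (u w : ℝ × ℝ) : ℝ :=
  Real.arccos (dotp u w / (vnorm u * vnorm w))

/-- The angle in `[0, π)` of the line through the origin with slope `s`
(with `θ(∞) = π/2`). -/
noncomputable def slopeAngle : Slope → ℝ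
  | none => Real.pi / 2
  | some q => if 0 ≤ q then Real.arctan (q : ℝ) else Real.arctan (q : ℝ) + Real.pi

/-- The positive angle `α(s,s')` from slope `s` to slope `s'`: the unique element of
`[0, π)` congruent to `θ(s') − θ(s)` modulo `π`. -/
noncomputable def posAngle (s s' : Slope) : ℝ :=
  if slopeAngle s' - slopeAngle s < 0 then slopeAngle s' - slopeAngle s + Real.pi
  else slopeAngle s' - slopeAngle s

/-- The positive turning `T = Σ α(sᵢ, sᵢ₊₁)` (indices mod `k`) of the cyclic slope
list `s 0, …, s (k-1)`. -/
noncomputable def posTurning (k : ℕ) (s : ℕ → Slope) : ℝ :=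
  ∑ j ∈ Finset.range k, posAngle (s j) (s ((j + 1) % k))

/-- The data of a continuous piecewise-linear path `γ : [0,k] → ℝ²` with `k` edges
(the `j`-th edge, `0 ≤ j < k`, being the image of `[j, j+1]`), subdivided into `m`
nonconstant affine pieces with breakpoints `t 0 < t 1 < ⋯ < t m`, where
`t 0 = 0`, `t m = k`, every integer time `j ≤ k` is the breakpoint of index `vi j`,
and `γ` is affine on each `[t i, t (i+1)]`. -/
structure PLPathData where
  /-- the number of edges -/
  k : ℕ
  kpos : 0 < k
  /-- the path -/
  γ : ℝ → ℝ × ℝ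
  /-- the number of affine pieces -/
  m : ℕ
  /-- the breakpoints -/
  t : ℕ → ℝ
  /-- `vi j` is the index of the breakpoint at integer time `j` -/
  vi : ℕ → ℕ
  t_mono : ∀ i < m, t i < t (i + 1)
  t_first : t 0 = 0
  t_last : t m = (k : ℝ)
  vi_le : ∀ j ≤ k, vi j ≤ m
  vi_t : ∀ j ≤ k, t (vi j) = (j : ℝ)
  affine : ∀ i < m, ∀ x ∈ Set.Icc (t i) (t (i + 1)),
    γ x = γ (t i) + ((x - t i) / (t (i + 1) - t i)) • (γ (t (i + 1)) - γ (t i))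
  nonconst : ∀ i < m, γ (t (i + 1)) ≠ γ (t i)

namespace PLPathData

variable (P : PLPathData)

/-- The direction of motion along the `i`-th affine piece. -/
noncomputable def dir (i : ℕ) : ℝ × ℝ := P.γ (P.t (i + 1)) - P.γ (P.t i)

/-- The breakpoint of index `i` is a fold: it is interior, does not occur at an
integer time (i.e. is not a vertex time), and the direction of motion reverses
there. -/
def IsFold (i : ℕ) : Prop :=
  0 < i ∧ i < P.m ∧ (∀ j : ℕ, j ≤ P.k → P.t i ≠ (j : ℝ)) ∧
    dotp (P.dir (i - 1)) (P.dir i) < 0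

/-- The number of fold points of the path. -/
noncomputable def foldCount : ℕ := {i | P.IsFold i}.ncard

/-- The `j`-th edge, as a subset of the plane. -/
def edge (j : ℕ) : Set (ℝ × ℝ) := P.γ '' Set.Icc (j : ℝ) ((j : ℝ) + 1)

/-- The path realizes the slope list `s 0, …, s (k-1)`: for each `j < k` the `j`-th
edge is contained in a line of slope `s j`, and consecutive edges have distinct
slopes. -/
def Realizes (s : ℕ → Slope) : Prop :=
  (∀ j < P.k, ∀ x ∈ Set.Icc (j : ℝ) ((j : ℝ) + 1),
    cross (P.γ x - P.γ (j : ℝ)) (primVecR (s j)) = 0) ∧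
  (∀ j, j + 1 < P.k → s j ≠ s (j + 1))

/-- The path (realizing the slope list `s`) is right polygonal: no fold point occurs
at (a neighborhood of) a vertex, and at each interior vertex the primitive integral
vectors `v, v'` in the incoming and outgoing directions satisfy `det (v, v') = 1`;
equivalently, `|det (primVec (s (j-1)), primVec (s j))| = 1` and the incoming and
outgoing directions of motion have positive cross product. -/
def RightPolygonalPathFor (s : ℕ → Slope) : Prop :=
  (∀ i, P.IsFold i → ∀ j : ℕ, j ≤ P.k → P.γ (P.t i) ≠ P.γ (j : ℝ)) ∧
  ∀ j, 1 ≤ j → j < P.k →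
    (primDet (s (j - 1)) (s j)).natAbs = 1 ∧
    0 < cross (P.dir (P.vi j - 1)) (P.dir (P.vi j))

/-- The path is a loop: its endpoints coincide. -/
def IsLoop : Prop := P.γ ((P.k : ℝ)) = P.γ 0

/-- The loop (realizing the cyclic slope list `s`) is right polygonal: it closes up,
no fold point occurs at (a neighborhood of) a vertex, and at each vertex
(cyclically) the primitive integral vectors `v, v'` in the incoming and outgoing
directions satisfy `det (v, v') = 1`. -/
def RightPolygonalLoopFor (s : ℕ → Slope) : Prop :=
  P.IsLoop ∧
  (∀ i, P.IsFold i → ∀ j : ℕ, j ≤ P.k → P.γ (P.t i) ≠ P.γ (j : ℝ)) ∧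
  ∀ j, 1 ≤ j → j ≤ P.k →
    (primDet (s (j - 1)) (s (j % P.k))).natAbs = 1 ∧
    0 < cross (P.dir (P.vi j - 1)) (P.dir (P.vi (j % P.k)))

/-- The path is embedded: distinct edges meet only if consecutive, and then only at
their common vertex, and no point of the plane is traversed three or more times. -/
def EmbeddedPath : Prop :=
  (∀ j j', j + 1 < j' → j' < P.k → P.edge j ∩ P.edge j' = ∅) ∧
  (∀ j, j + 1 < P.k → P.edge j ∩ P.edge (j + 1) = {P.γ ((j : ℝ) + 1)}) ∧
  ∀ x₁ x₂ x₃, x₁ ∈ Set.Icc (0 : ℝ) (P.k : ℝ) → x₂ ∈ Set.Icc (0 : ℝ) (P.k : ℝ) →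
    x₃ ∈ Set.Icc (0 : ℝ) (P.k : ℝ) → x₁ < x₂ → x₂ < x₃ →
    ¬(P.γ x₁ = P.γ x₂ ∧ P.γ x₂ = P.γ x₃)

/-- The loop is embedded: distinct edges meet only if cyclically consecutive, and
then only at their common vertex (vertices, if `k = 2`), and no point of the plane is
traversed three or more times. -/
def EmbeddedLoop : Prop :=
  (∀ j j', j < j' → j' < P.k → j' ≠ j + 1 → ¬(j = 0 ∧ j' + 1 = P.k) →
    P.edge j ∩ P.edge j' = ∅) ∧
  (∀ j, j + 1 < P.k → ¬(j = 0 ∧ j + 2 = P.k) →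
    P.edge j ∩ P.edge (j + 1) = {P.γ ((j : ℝ) + 1)}) ∧
  (2 < P.k → P.edge 0 ∩ P.edge (P.k - 1) = {P.γ 0}) ∧
  (P.k = 2 → P.edge 0 ∩ P.edge 1 = {P.γ 0, P.γ 1}) ∧
  ∀ x₁ x₂ x₃, x₁ ∈ Set.Ico (0 : ℝ) (P.k : ℝ) → x₂ ∈ Set.Ico (0 : ℝ) (P.k : ℝ) →
    x₃ ∈ Set.Ico (0 : ℝ) (P.k : ℝ) → x₁ < x₂ → x₂ < x₃ →
    ¬(P.γ x₁ = P.γ x₂ ∧ P.γ x₂ = P.γ x₃)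

/-- The total turning of a (right polygonal) loop with folds: the sum over the
vertices `j = 1, …, k` (the vertex `k` being the initial vertex) of the
counterclockwise angle from the incoming direction to the outgoing direction,
plus `−π` for each fold point. -/
noncomputable def totalTurning : ℝ :=
  (∑ j ∈ Finset.Icc 1 P.k, turnAngle (P.dir (P.vi j - 1)) (P.dir (P.vi (j % P.k))))
    - (P.foldCount : ℝ) * Real.pi

end PLPathData

-- auxiliary
def ERPnrm (u : ℝ × ℝ) : ℝ := |u.1| + |u.2|

lemma ERPnrm_nonneg (u : ℝ × ℝ) : 0 ≤ ERPnrm u := by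
  unfold ERPnrm; positivity

lemma ERPnrm_add_le (u v : ℝ × ℝ) : ERPnrm (u + v) ≤ ERPnrm u + ERPnrm v := by
  unfold ERPnrm
  have h1 := abs_add_le u.1 v.1
  have h2 := abs_add_le u.2 v.2
  simp only [Prod.fst_add, Prod.snd_add]
  linarith

lemma ERPnrm_smul (c : ℝ) (u : ℝ × ℝ) : ERPnrm (c • u) = |c| * ERPnrm u := by
  unfold ERPnrm
  simp only [Prod.smul_fst, Prod.smul_snd, smul_eq_mul, abs_mul]
  ring

lemma ERPabs_fst_le (u : ℝ × ℝ) : |u.1| ≤ ERPnrm u := by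
  unfold ERPnrm; have := abs_nonneg u.2; linarith

lemma ERPabs_snd_le (u : ℝ × ℝ) : |u.2| ≤ ERPnrm u := by
  unfold ERPnrm; have := abs_nonneg u.1; linarith

lemma ERPabs_cross_le (u v : ℝ × ℝ) : |cross u v| ≤ ERPnrm u * ERPnrm v := by
  unfold cross ERPnrm
  calc |u.1 * v.2 - u.2 * v.1| ≤ |u.1 * v.2| + |u.2 * v.1| := abs_sub _ _
    _ = |u.1| * |v.2| + |u.2| * |v.1| := by rw [abs_mul, abs_mul]
    _ ≤ (|u.1| + |u.2|) * (|v.1| + |v.2|) := by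
        nlinarith [abs_nonneg u.1, abs_nonneg u.2, abs_nonneg v.1, abs_nonneg v.2]

lemma ERPnrm_sum_le (t : Finset ℕ) (f : ℕ → ℝ × ℝ) :
    ERPnrm (∑ i ∈ t, f i) ≤ ∑ i ∈ t, ERPnrm (f i) := by
  classical
  induction t using Finset.cons_induction with
  | empty => simp [ERPnrm]
  | cons a t ha ih =>
      rw [Finset.sum_cons, Finset.sum_cons]
      calc ERPnrm (f a + ∑ i ∈ t, f i) ≤ ERPnrm (f a) + ERPnrm (∑ i ∈ t, f i) :=
            ERPnrm_add_le _ _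
        _ ≤ _ := by linarith [ih]

lemma ERPcross_self (u : ℝ × ℝ) : cross u u = 0 := by unfold cross; ring

lemma ERPcross_smul_right (u v : ℝ × ℝ) (c : ℝ) : cross u (c • v) = c * cross u v := by
  unfold cross; simp only [Prod.smul_fst, Prod.smul_snd, smul_eq_mul]; ring

lemma ERPcross_smul_left (u v : ℝ × ℝ) (c : ℝ) : cross (c • u) v = c * cross u v := by
  unfold cross; simp only [Prod.smul_fst, Prod.smul_snd, smul_eq_mul]; ring

lemma ERPcross_add_right (u v w : ℝ × ℝ) : cross u (v + w) = cross u v + cross u w := by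
  unfold cross; simp only [Prod.fst_add, Prod.snd_add]; ring

lemma ERPcross_sub_right (u v w : ℝ × ℝ) : cross u (v - w) = cross u v - cross u w := by
  unfold cross; simp only [Prod.fst_sub, Prod.snd_sub]; ring

lemma ERPone_le_nrm_primVecR (s : Slope) : 1 ≤ ERPnrm (primVecR s) := by
  cases s with
  | none => simp [primVecR, primVec, ERPnrm]
  | some q =>
      simp only [primVecR, primVec, ERPnrm]
      have h : (1 : ℝ) ≤ (q.den : ℝ) := by exact_mod_cast q.pos
      have : |((q.den : ℤ) : ℝ)| = (q.den : ℝ) := by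
        rw [abs_of_nonneg]; · push_cast; ring
        · positivity
      rw [this]
      have := abs_nonneg ((q.num : ℝ))
      linarith

lemma ERPcross_primVecR (a b : Slope) :
    cross (primVecR a) (primVecR b) = ((primDet a b : ℤ) : ℝ) := by
  unfold cross primVecR primDet; push_cast; ring

lemma ERPprimDet_self (a : Slope) : primDet a a = 0 := by unfold primDet; ring

def ERPsgn (s : ℕ → Slope) : ℕ → ℤ
  | 0 => 1
  | j + 1 => ERPsgn s j * primDet (s j) (s (j + 1))

noncomputable def ERPw (s : ℕ → Slope) (j : ℕ) : ℝ × ℝ :=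
  ((ERPsgn s j : ℤ) : ℝ) • primVecR (s j)

noncomputable def ERPA (s : ℕ → Slope) (ℓ : ℕ → ℝ) (n : ℕ) : ℝ × ℝ :=
  ∑ i ∈ Finset.range n, ℓ i • ERPw s i

noncomputable def ERPγ (s : ℕ → Slope) (ℓ : ℕ → ℝ) (x : ℝ) : ℝ × ℝ :=
  ERPA s ℓ ⌊x⌋₊ + (x - (⌊x⌋₊ : ℝ)) • (ℓ ⌊x⌋₊ • ERPw s ⌊x⌋₊)

lemma ERPA_succ (s : ℕ → Slope) (ℓ : ℕ → ℝ) (n : ℕ) :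
    ERPA s ℓ (n + 1) = ERPA s ℓ n + ℓ n • ERPw s n := Finset.sum_range_succ _ _

lemma ERPγ_natCast (s : ℕ → Slope) (ℓ : ℕ → ℝ) (n : ℕ) :
    ERPγ s ℓ (n : ℝ) = ERPA s ℓ n := by
  unfold ERPγ; simp

lemma ERPγ_eq (s : ℕ → Slope) (ℓ : ℕ → ℝ) (j : ℕ) (x : ℝ)
    (h1 : (j : ℝ) ≤ x) (h2 : x ≤ (j : ℝ) + 1) :
    ERPγ s ℓ x = ERPA s ℓ j + (x - (j : ℝ)) • (ℓ j • ERPw s j) := by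
  rcases eq_or_lt_of_le h2 with h | h
  · have hx : x = ((j + 1 : ℕ) : ℝ) := by push_cast; linarith
    rw [hx, ERPγ_natCast, ERPA_succ]
    have : (((j + 1 : ℕ) : ℝ) - (j : ℝ)) = 1 := by push_cast; ring
    rw [this, one_smul]
  · have h0 : (0 : ℝ) ≤ x := le_trans (by positivity) h1
    have hfl : ⌊x⌋₊ = j := by
      rw [Nat.floor_eq_iff h0]; exact ⟨h1, by push_cast; linarith⟩
    unfold ERPγ; rw [hfl]

lemma ERPgeom_range (r : ℝ) (h0 : 0 ≤ r) (h2 : r ≤ 1 / 2) (n : ℕ) :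
    ∑ i ∈ Finset.range n, r ^ i ≤ 2 := by
  induction n with
  | zero => simp
  | succ n ih =>
      rw [Finset.sum_range_succ']
      have : ∀ i ∈ Finset.range n, r ^ (i + 1) = r * r ^ i := by
        intro i _; rw [pow_succ]; ring
      rw [Finset.sum_congr rfl this, ← Finset.mul_sum]
      have hs0 : (0:ℝ) ≤ ∑ i ∈ Finset.range n, r ^ i :=
        Finset.sum_nonneg fun i _ => by positivity
      nlinarith

lemma ERPgeom_Ico (r : ℝ) (h0 : 0 ≤ r) (h2 : r ≤ 1 / 2) (a k : ℕ) :
    ∑ i ∈ Finset.Ico a k, r ^ i ≤ 2 * r ^ a := by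
  rw [Finset.sum_Ico_eq_sum_range]
  have : ∀ i ∈ Finset.range (k - a), r ^ (a + i) = r ^ a * r ^ i := by
    intro i _; rw [pow_add]
  rw [Finset.sum_congr rfl this, ← Finset.mul_sum]
  have := ERPgeom_range r h0 h2 (k - a)
  have hra : (0:ℝ) ≤ r ^ a := by positivity
  nlinarith

lemma ERPinj (s : ℕ → Slope) (k : ℕ) (ℓ : ℕ → ℝ) (hk : 2 ≤ k)
    (hlpos : ∀ i, 0 < ℓ i)
    (hw : ∀ j < k, ERPw s j ≠ 0)
    (hcross : ∀ j, j + 1 < k → cross (ERPw s j) (ERPw s (j + 1)) = 1)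
    (hfar : ∀ j, j + 2 < k →
      ERPnrm (ERPw s j) * ∑ i ∈ Finset.Ico (j + 2) k, ℓ i * ERPnrm (ERPw s i) < ℓ (j + 1)) :
    ∀ x ∈ Set.Icc (0 : ℝ) (k : ℝ), ∀ y ∈ Set.Icc (0 : ℝ) (k : ℝ), x < y →
      ERPγ s ℓ x ≠ ERPγ s ℓ y := by
  intro x hx y hy hxy heq
  have hxk : x < (k : ℝ) := lt_of_lt_of_le hxy hy.2
  set j := ⌊x⌋₊ with hjdef
  have hj1 : (j : ℝ) ≤ x := Nat.floor_le hx.1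
  have hj2 : x ≤ (j : ℝ) + 1 := (Nat.lt_floor_add_one x).le
  have hjk : j < k := by rw [hjdef, Nat.floor_lt hx.1]; exact hxk
  obtain ⟨j', hj'k, hy1, hy2⟩ : ∃ j', j' < k ∧ (j' : ℝ) ≤ y ∧ y ≤ (j' : ℝ) + 1 := by
    rcases eq_or_lt_of_le hy.2 with h | h
    · refine ⟨k - 1, by omega, ?_, ?_⟩
      · rw [h]; have : ((k - 1 : ℕ) : ℝ) = (k : ℝ) - 1 := by
          have : (1:ℕ) ≤ k := by omega
          push_cast [this]; ring
        rw [this]; linarith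
      · have : ((k - 1 : ℕ) : ℝ) = (k : ℝ) - 1 := by
          have : (1:ℕ) ≤ k := by omega
          push_cast [this]; ring
        rw [h, this]; linarith
    · exact ⟨⌊y⌋₊, by rw [Nat.floor_lt hy.1]; exact h, Nat.floor_le hy.1,
        (Nat.lt_floor_add_one y).le⟩
  have hjj' : j ≤ j' := by
    have : (j : ℝ) < (j' : ℝ) + 1 := by linarith
    have := by exact_mod_cast this
    omega
  rw [ERPγ_eq s ℓ j x hj1 hj2, ERPγ_eq s ℓ j' y hy1 hy2] at heq
  set a := x - (j : ℝ) with hadef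
  set b := y - (j' : ℝ) with hbdef
  have ha0 : 0 ≤ a := by simp [hadef]; linarith
  have ha1 : a ≤ 1 := by simp [hadef]; linarith
  have hb0 : 0 ≤ b := by simp [hbdef]; linarith
  have hb1 : b ≤ 1 := by simp [hbdef]; linarith
  clear_value a b
  have hX : ℓ j • ERPw s j ≠ 0 := smul_ne_zero (ne_of_gt (hlpos j)) (hw j hjk)
  rcases Nat.lt_or_ge j' (j + 2) with hcase | hcase
  · have : j' = j ∨ j' = j + 1 := by omega
    rcases this with rfl | rfl
    · -- same piece
      have h1 : (a - b) • (ℓ j • ERPw s j) = 0 := by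
        rw [sub_smul, add_left_cancel heq]; abel
      rcases smul_eq_zero.mp h1 with h | h
      · have hab : a = b := by linarith [sub_eq_zero.mp h]
        have : x = y := by rw [hadef, hbdef] at hab; linarith
        linarith
      · exact hX h
    · -- adjacent pieces
      have hj1k : j + 1 < k := hj'k
      rw [ERPA_succ] at heq
      rw [add_assoc] at heq
      have hsub : a • (ℓ j • ERPw s j) = ℓ j • ERPw s j + b • (ℓ (j+1) • ERPw s (j+1)) :=
        add_left_cancel heq
      have h0 : cross (ERPw s j) (a • (ℓ j • ERPw s j)) =
          cross (ERPw s j) (ℓ j • ERPw s j + b • (ℓ (j+1) • ERPw s (j+1))) := by rw [hsub]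
      rw [ERPcross_add_right] at h0
      simp only [ERPcross_smul_right, ERPcross_self, hcross j hj1k] at h0
      have hb : b = 0 := by
        have := hlpos (j + 1)
        have h0' : b * ℓ (j + 1) = 0 := by linarith [h0]
        rcases mul_eq_zero.mp h0' with h | h
        · exact h
        · linarith
      rw [hb, zero_smul, add_zero] at hsub
      have ha : a = 1 := by
        have h1 : (a - 1) • (ℓ j • ERPw s j) = 0 := by
          rw [sub_smul, one_smul, hsub]; abel
        rcases smul_eq_zero.mp h1 with h | h
        · linarith [sub_eq_zero.mp h]
        · exact absurd h hX
      -- then x = j + 1 = y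
      have hxv : x = (j : ℝ) + 1 := by rw [hadef] at ha; linarith
      have hyv : y = (j : ℝ) + 1 := by
        rw [hbdef] at hb; push_cast at hb ⊢; linarith
      rw [hxv, hyv] at hxy; exact lt_irrefl _ hxy
  · -- far pieces
    have hj2k : j + 2 < k := by omega
    have hj1k : j + 1 < k := by omega
    set p := ERPA s ℓ j + a • (ℓ j • ERPw s j) with hpdef
    have hA2 : ERPA s ℓ (j + 2) = ERPA s ℓ j + ℓ j • ERPw s j + ℓ (j+1) • ERPw s (j+1) := by
      rw [ERPA_succ, ERPA_succ]
    have hdiff : p - ERPA s ℓ (j + 2) =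
        (a - 1) • (ℓ j • ERPw s j) - ℓ (j+1) • ERPw s (j+1) := by
      rw [hpdef, hA2, sub_smul, one_smul]; abel
    have hcval : cross (ERPw s j) (p - ERPA s ℓ (j + 2)) = -ℓ (j + 1) := by
      rw [hdiff, ERPcross_sub_right]
      simp only [ERPcross_smul_right, ERPcross_self, hcross j hj1k]
      ring
    have hlow : ℓ (j + 1) ≤ ERPnrm (ERPw s j) * ERPnrm (p - ERPA s ℓ (j + 2)) := by
      have h := ERPabs_cross_le (ERPw s j) (p - ERPA s ℓ (j + 2))
      rw [hcval, abs_neg, abs_of_pos (hlpos (j+1))] at h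
      exact h
    have hup : ERPnrm (p - ERPA s ℓ (j + 2)) ≤
        ∑ i ∈ Finset.Ico (j + 2) k, ℓ i * ERPnrm (ERPw s i) := by
      have hpy : p = ERPA s ℓ j' + b • (ℓ j' • ERPw s j') := heq
      have hIco : ∑ i ∈ Finset.Ico (j + 2) j', ℓ i • ERPw s i =
          ERPA s ℓ j' - ERPA s ℓ (j + 2) :=
        Finset.sum_Ico_eq_sub _ hcase
      have hsplit : p - ERPA s ℓ (j + 2) =
          (∑ i ∈ Finset.Ico (j + 2) j', ℓ i • ERPw s i) + b • (ℓ j' • ERPw s j') := by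
        rw [hIco, hpy]; abel
      rw [hsplit]
      calc ERPnrm ((∑ i ∈ Finset.Ico (j + 2) j', ℓ i • ERPw s i) + b • (ℓ j' • ERPw s j'))
          ≤ ERPnrm (∑ i ∈ Finset.Ico (j + 2) j', ℓ i • ERPw s i)
            + ERPnrm (b • (ℓ j' • ERPw s j')) := ERPnrm_add_le _ _
        _ ≤ (∑ i ∈ Finset.Ico (j + 2) j', ℓ i * ERPnrm (ERPw s i))
            + ℓ j' * ERPnrm (ERPw s j') := by
            have h1 := ERPnrm_sum_le (Finset.Ico (j + 2) j') (fun i => ℓ i • ERPw s i)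
            have h2 : ∀ i ∈ Finset.Ico (j + 2) j', ERPnrm (ℓ i • ERPw s i)
                = ℓ i * ERPnrm (ERPw s i) := by
              intro i _; rw [ERPnrm_smul, abs_of_pos (hlpos i)]
            rw [Finset.sum_congr rfl h2] at h1
            have h3 : ERPnrm (b • (ℓ j' • ERPw s j')) ≤ ℓ j' * ERPnrm (ERPw s j') := by
              rw [ERPnrm_smul, ERPnrm_smul, abs_of_nonneg hb0, abs_of_pos (hlpos j')]
              have hN : 0 ≤ ℓ j' * ERPnrm (ERPw s j') :=
                mul_nonneg (hlpos j').le (ERPnrm_nonneg _)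
              nlinarith [mul_nonneg (sub_nonneg.mpr hb1) hN]
            linarith
        _ = ∑ i ∈ Finset.Ico (j + 2) (j' + 1), ℓ i * ERPnrm (ERPw s i) := by
            rw [Finset.sum_Ico_succ_top hcase]
        _ ≤ ∑ i ∈ Finset.Ico (j + 2) k, ℓ i * ERPnrm (ERPw s i) := by
            apply Finset.sum_le_sum_of_subset_of_nonneg
            · exact Finset.Ico_subset_Ico le_rfl (by omega)
            · intro i _ _
              exact mul_nonneg (hlpos i).le (ERPnrm_nonneg _)
    have hfin := hfar j hj2k
    have hnn := ERPnrm_nonneg (ERPw s j)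
    nlinarith

lemma ERPsgn_pm (s : ℕ → Slope) (k : ℕ)
    (hrp : ∀ j, j + 1 < k → (primDet (s j) (s (j + 1))).natAbs = 1) :
    ∀ j < k, ERPsgn s j = 1 ∨ ERPsgn s j = -1 := by
  intro j
  induction j with
  | zero => intro _; left; rfl
  | succ n ih =>
      intro h
      have hd := Int.natAbs_eq_iff.mp (hrp n (by omega))
      push_cast at hd
      rcases ih (by omega) with h1 | h1 <;> rcases hd with h2 | h2 <;>
        simp [ERPsgn, h1, h2]

lemma ERPcross_w (s : ℕ → Slope) (k : ℕ)
    (hrp : ∀ j, j + 1 < k → (primDet (s j) (s (j + 1))).natAbs = 1) :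
    ∀ j, j + 1 < k → cross (ERPw s j) (ERPw s (j + 1)) = 1 := by
  intro j hj
  have hd := Int.natAbs_eq_iff.mp (hrp j hj)
  push_cast at hd
  have hsj := ERPsgn_pm s k hrp j (by omega)
  unfold ERPw
  rw [ERPcross_smul_left, ERPcross_smul_right, ERPcross_primVecR]
  have hrec : ERPsgn s (j + 1) = ERPsgn s j * primDet (s j) (s (j + 1)) := rfl
  rw [hrec]
  rcases hsj with h1 | h1 <;> rcases hd with h2 | h2 <;> rw [h1, h2] <;> norm_num

lemma ERPnrm_w (s : ℕ → Slope) (k : ℕ)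
    (hrp : ∀ j, j + 1 < k → (primDet (s j) (s (j + 1))).natAbs = 1) :
    ∀ j < k, ERPnrm (ERPw s j) = ERPnrm (primVecR (s j)) := by
  intro j hj
  rcases ERPsgn_pm s k hrp j hj with h | h <;>
    · unfold ERPw; rw [h]; rw [ERPnrm_smul]; norm_num


set_option maxHeartbeats 1600000 in
/-- Given a right polygonal slope list `s 0, …, s (k-1)` with `k ≥ 2`, `s 0 = 0`,
`s 1 = ∞`, and a point `(x₀, y₀)` with `x₀, y₀ > 0`, there exists an embedded right
polygonal path with folds realizing the slope list, with initial endpoint `(0,0)`,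
final endpoint `(x₀, y₀)`, and whose first edge has oriented tangent vector
`(1, 0)`. -/
theorem exists_embedded_right_polygonal_path
    (k : ℕ) (hk : 2 ≤ k) (s : ℕ → Slope)
    (hs0 : s 0 = some 0) (hs1 : s 1 = none)
    (hrp : ∀ j, j + 1 < k → (primDet (s j) (s (j + 1))).natAbs = 1)
    (x₀ y₀ : ℝ) (hx : 0 < x₀) (hy : 0 < y₀) :
    ∃ P : PLPathData, P.k = k ∧ P.Realizes s ∧ P.RightPolygonalPathFor s ∧
      P.EmbeddedPath ∧ P.γ 0 = (0, 0) ∧ P.γ ((k : ℝ)) = (x₀, y₀) ∧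
      ∀ x ∈ Set.Icc (0 : ℝ) 1, ∀ x' ∈ Set.Icc (0 : ℝ) 1, x < x' →
        (P.γ x).1 < (P.γ x').1 := by
  have hcrossw := ERPcross_w s k hrp
  have hnrmw := ERPnrm_w s k hrp
  have hB1 : ∀ j < k, 1 ≤ ERPnrm (ERPw s j) := fun j hj =>
    (hnrmw j hj) ▸ ERPone_le_nrm_primVecR (s j)
  have hwne : ∀ j < k, ERPw s j ≠ 0 := by
    intro j hj h
    have h1 := hB1 j hj
    rw [h] at h1
    norm_num [ERPnrm] at h1
  obtain ⟨M, hM1, hBM⟩ : ∃ M : ℝ, 1 ≤ M ∧ ∀ j < k, ERPnrm (ERPw s j) ≤ M := by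
    refine ⟨1 + ∑ i ∈ Finset.range k, ERPnrm (ERPw s i), ?_, ?_⟩
    · have h0 : 0 ≤ ∑ i ∈ Finset.range k, ERPnrm (ERPw s i) :=
        Finset.sum_nonneg fun i _ => ERPnrm_nonneg _
      linarith
    · intro j hj
      have h := Finset.single_le_sum (f := fun i => ERPnrm (ERPw s i))
        (fun i _ => ERPnrm_nonneg _) (Finset.mem_range.mpr hj)
      linarith
  have hM0 : 0 < M := lt_of_lt_of_le one_pos hM1
  obtain ⟨r, hr0, hrM⟩ : ∃ r : ℝ, 0 < r ∧ 8 * M ^ 2 * r = 1 :=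
    ⟨1 / (8 * M ^ 2), by positivity, by field_simp⟩
  have hM2 : 1 ≤ M ^ 2 := one_le_pow₀ hM1
  have hrle : r ≤ 1 / 8 := by
    nlinarith [mul_nonneg hr0.le (sub_nonneg.mpr hM2)]
  have hr1 : r ≤ 1 := by linarith
  have hrhalf : r ≤ 1 / 2 := by linarith
  obtain ⟨δ, hδ0, hδx, hδy⟩ : ∃ δ : ℝ, 0 < δ ∧ δ ≤ x₀ ∧ δ ≤ y₀ :=
    ⟨min x₀ y₀, lt_min hx hy, min_le_left _ _, min_le_right _ _⟩
  set Sx : ℝ := ∑ i ∈ Finset.Ico 2 k, (δ * r ^ i) * (ERPw s i).1 with hSxdef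
  set Sy : ℝ := ∑ i ∈ Finset.Ico 2 k, (δ * r ^ i) * (ERPw s i).2 with hSydef
  set ℓ : ℕ → ℝ := fun i => if i = 0 then x₀ - Sx else if i = 1 then y₀ - Sy else δ * r ^ i
    with hℓdef
  have hδr : ∀ i : ℕ, (0:ℝ) < δ * r ^ i := fun i => mul_pos hδ0 (pow_pos hr0 i)
  have hsum : ∀ a : ℕ, ∑ i ∈ Finset.Ico a k, (δ * r ^ i) * ERPnrm (ERPw s i)
      ≤ 2 * M * δ * r ^ a := by
    intro a
    calc ∑ i ∈ Finset.Ico a k, (δ * r ^ i) * ERPnrm (ERPw s i)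
        ≤ ∑ i ∈ Finset.Ico a k, M * δ * r ^ i := by
          apply Finset.sum_le_sum
          intro i hi
          have hik : i < k := (Finset.mem_Ico.mp hi).2
          have h1 := hBM i hik
          have h2 := mul_le_mul_of_nonneg_left h1 (hδr i).le
          nlinarith
      _ = M * δ * ∑ i ∈ Finset.Ico a k, r ^ i := by
          rw [Finset.mul_sum]
      _ ≤ M * δ * (2 * r ^ a) := by
          have h1 := ERPgeom_Ico r hr0.le hrhalf a k
          have h2 : (0:ℝ) ≤ M * δ := mul_nonneg hM0.le hδ0.le
          nlinarith
      _ = 2 * M * δ * r ^ a := by ring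
  have hM3 : 1 ≤ M ^ 3 := one_le_pow₀ hM1
  have hT : ∑ i ∈ Finset.Ico 2 k, (δ * r ^ i) * ERPnrm (ERPw s i) ≤ δ / 32 := by
    have h := hsum 2
    have h5 : 2 * M * δ * r ^ 2 * (32 * M ^ 3) = δ := by
      linear_combination (δ * (8 * M ^ 2 * r + 1)) * hrM
    have h2 : 2 * M * δ * r ^ 2 ≤ δ / 32 := by
      rw [le_div_iff₀ (by norm_num : (0:ℝ) < 32)]
      have hA : 0 ≤ 2 * M * δ * r ^ 2 :=
        mul_nonneg (mul_nonneg (mul_nonneg (by norm_num) hM0.le) hδ0.le) (sq_nonneg r)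
      nlinarith [h5, mul_nonneg hA (sub_nonneg.mpr hM3)]
    linarith
  have hSxb : |Sx| ≤ δ / 32 := by
    rw [hSxdef]
    calc |∑ i ∈ Finset.Ico 2 k, (δ * r ^ i) * (ERPw s i).1|
        ≤ ∑ i ∈ Finset.Ico 2 k, |(δ * r ^ i) * (ERPw s i).1| :=
          Finset.abs_sum_le_sum_abs _ _
      _ ≤ ∑ i ∈ Finset.Ico 2 k, (δ * r ^ i) * ERPnrm (ERPw s i) := by
          apply Finset.sum_le_sum
          intro i _
          rw [abs_mul, abs_of_nonneg (hδr i).le]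
          exact mul_le_mul_of_nonneg_left (ERPabs_fst_le _) (hδr i).le
      _ ≤ δ / 32 := hT
  have hSyb : |Sy| ≤ δ / 32 := by
    rw [hSydef]
    calc |∑ i ∈ Finset.Ico 2 k, (δ * r ^ i) * (ERPw s i).2|
        ≤ ∑ i ∈ Finset.Ico 2 k, |(δ * r ^ i) * (ERPw s i).2| :=
          Finset.abs_sum_le_sum_abs _ _
      _ ≤ ∑ i ∈ Finset.Ico 2 k, (δ * r ^ i) * ERPnrm (ERPw s i) := by
          apply Finset.sum_le_sum
          intro i _
          rw [abs_mul, abs_of_nonneg (hδr i).le]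
          exact mul_le_mul_of_nonneg_left (ERPabs_snd_le _) (hδr i).le
      _ ≤ δ / 32 := hT
  have hl0v : ℓ 0 = x₀ - Sx := by simp only [hℓdef]; norm_num
  have hl1v : ℓ 1 = y₀ - Sy := by simp only [hℓdef]; norm_num
  have hl2v : ∀ i, 2 ≤ i → ℓ i = δ * r ^ i := by
    intro i hi
    have h0 : i ≠ 0 := by omega
    have h1 : i ≠ 1 := by omega
    simp [hℓdef, h0, h1]
  have hSx1 := abs_le.mp hSxb
  have hSy1 := abs_le.mp hSyb
  have hl0 : δ / 2 ≤ ℓ 0 := by rw [hl0v]; linarith [hSx1.1, hSx1.2]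
  have hl1 : δ / 2 ≤ ℓ 1 := by rw [hl1v]; linarith [hSy1.1, hSy1.2]
  have hlpos : ∀ i, 0 < ℓ i := by
    intro i
    rcases Nat.lt_or_ge i 2 with h | h
    · interval_cases i
      · linarith
      · linarith
    · rw [hl2v i h]; exact hδr i
  have hllow : ∀ i, δ * r ^ i / 2 ≤ ℓ i := by
    intro i
    rcases Nat.lt_or_ge i 2 with h | h
    · interval_cases i
      · rw [pow_zero]; linarith
      · rw [pow_one]
        nlinarith [mul_nonneg hδ0.le (sub_nonneg.mpr hr1)]
    · rw [hl2v i h]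
      linarith [hδr i]
  have hfar : ∀ j, j + 2 < k →
      ERPnrm (ERPw s j) * ∑ i ∈ Finset.Ico (j + 2) k, ℓ i * ERPnrm (ERPw s i)
        < ℓ (j + 1) := by
    intro j hj
    have hrw : ∀ i ∈ Finset.Ico (j + 2) k, ℓ i * ERPnrm (ERPw s i)
        = (δ * r ^ i) * ERPnrm (ERPw s i) := by
      intro i hi
      rw [hl2v i (le_trans (by omega) (Finset.mem_Ico.mp hi).1)]
    rw [Finset.sum_congr rfl hrw]
    have h1 := hsum (j + 2)
    have hBj := hBM j (by omega)
    have hnn : 0 ≤ ∑ i ∈ Finset.Ico (j + 2) k, (δ * r ^ i) * ERPnrm (ERPw s i) :=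
      Finset.sum_nonneg fun i _ => mul_nonneg (hδr i).le (ERPnrm_nonneg _)
    have hlb := hllow (j + 1)
    have h2 : ERPnrm (ERPw s j) * ∑ i ∈ Finset.Ico (j + 2) k, (δ * r ^ i) * ERPnrm (ERPw s i)
        ≤ M * (2 * M * δ * r ^ (j + 2)) :=
      mul_le_mul hBj h1 hnn (by linarith)
    have key : M * (2 * M * δ * r ^ (j + 2)) = δ * r ^ (j + 1) / 4 := by
      rw [pow_succ]
      linear_combination (δ * r ^ (j + 1) / 4) * hrM
    rw [key] at h2
    have h3 := hδr (j + 1)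
    linarith
  have hinj := ERPinj s k ℓ hk hlpos hwne hcrossw hfar
  -- basic vector values
  have hw0 : ERPw s 0 = ((1:ℝ), (0:ℝ)) := by
    unfold ERPw
    rw [hs0]
    norm_num [ERPsgn, primVecR, primVec]
  have hsgn1v : ERPsgn s 1 = 1 := by
    show ERPsgn s 0 * primDet (s 0) (s 1) = 1
    rw [hs0, hs1]
    norm_num [ERPsgn, primDet, primVec]
  have hw1 : ERPw s 1 = ((0:ℝ), (1:ℝ)) := by
    unfold ERPw
    rw [hsgn1v, hs1]
    norm_num [primVecR, primVec]
  -- endpoint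
  have hfst2 : (∑ i ∈ Finset.Ico 2 k, ℓ i • ERPw s i).1 = Sx := by
    rw [Prod.fst_sum, hSxdef]
    apply Finset.sum_congr rfl
    intro i hi
    rw [hl2v i (Finset.mem_Ico.mp hi).1, Prod.smul_fst, smul_eq_mul]
  have hsnd2 : (∑ i ∈ Finset.Ico 2 k, ℓ i • ERPw s i).2 = Sy := by
    rw [Prod.snd_sum, hSydef]
    apply Finset.sum_congr rfl
    intro i hi
    rw [hl2v i (Finset.mem_Ico.mp hi).1, Prod.smul_snd, smul_eq_mul]
  have hAk : ERPA s ℓ k = (x₀, y₀) := by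
    unfold ERPA
    rw [Finset.range_eq_Ico, ← Finset.sum_Ico_consecutive _ (Nat.zero_le 2) hk]
    have h01 : ∑ i ∈ Finset.Ico 0 2, ℓ i • ERPw s i = ℓ 0 • ERPw s 0 + ℓ 1 • ERPw s 1 := by
      rw [← Finset.range_eq_Ico, Finset.sum_range_succ, Finset.sum_range_one]
    rw [h01, hw0, hw1, hl0v, hl1v]
    have hcmp1 : ((x₀ - Sx) • ((1:ℝ), (0:ℝ)) + (y₀ - Sy) • ((0:ℝ), (1:ℝ))
        + ∑ i ∈ Finset.Ico 2 k, ℓ i • ERPw s i).1 = x₀ := by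
      simp only [Prod.fst_add, Prod.smul_mk, Prod.mk.injEq, smul_eq_mul, hfst2]
      ring
    have hcmp2 : ((x₀ - Sx) • ((1:ℝ), (0:ℝ)) + (y₀ - Sy) • ((0:ℝ), (1:ℝ))
        + ∑ i ∈ Finset.Ico 2 k, ℓ i • ERPw s i).2 = y₀ := by
      simp only [Prod.snd_add, Prod.smul_mk, Prod.mk.injEq, smul_eq_mul, hsnd2]
      ring
    exact Prod.ext hcmp1 hcmp2
  -- the path data
  refine ⟨{ k := k
            kpos := (by omega)
            γ := ERPγ s ℓ
            m := k
            t := fun i => (i : ℝ)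
            vi := fun j => j
            t_mono := (by intro i _; show (i:ℝ) < ((i+1:ℕ):ℝ); exact_mod_cast Nat.lt_succ_self i)
            t_first := Nat.cast_zero
            t_last := rfl
            vi_le := fun j hj => hj
            vi_t := fun j _ => rfl
            affine := ?_
            nonconst := ?_ }, rfl, ⟨?_, ?_⟩, ⟨?_, ?_⟩, ⟨?_, ?_, ?_⟩, ?_, ?_, ?_⟩
  · -- affine
    intro i hi x hxmem
    have hx1 : (i:ℝ) ≤ x := hxmem.1
    have hx2 : x ≤ (i:ℝ) + 1 := by
      have := hxmem.2; push_cast at this; linarith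
    show ERPγ s ℓ x = ERPγ s ℓ ((i:ℕ):ℝ)
      + ((x - (i:ℝ)) / (((i+1:ℕ):ℝ) - (i:ℝ))) • (ERPγ s ℓ ((i+1:ℕ):ℝ) - ERPγ s ℓ ((i:ℕ):ℝ))
    rw [ERPγ_eq s ℓ i x hx1 hx2, ERPγ_natCast, ERPγ_natCast, ERPA_succ]
    have hden : (((i+1:ℕ):ℝ) - (i:ℝ)) = 1 := by push_cast; ring
    rw [hden, div_one, add_sub_cancel_left]
  · -- nonconst
    intro i hi
    show ERPγ s ℓ ((i+1:ℕ):ℝ) ≠ ERPγ s ℓ ((i:ℕ):ℝ)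
    rw [ERPγ_natCast, ERPγ_natCast, ERPA_succ]
    intro h
    have h2 : ℓ i • ERPw s i = 0 := by
      have h3 := congrArg (fun z => z - ERPA s ℓ i) h
      simpa using h3
    exact smul_ne_zero (ne_of_gt (hlpos i)) (hwne i hi) h2
  · -- Realizes part 1
    intro j hj x hxmem
    show cross (ERPγ s ℓ x - ERPγ s ℓ ((j:ℕ):ℝ)) (primVecR (s j)) = 0
    rw [ERPγ_eq s ℓ j x hxmem.1 hxmem.2, ERPγ_natCast, add_sub_cancel_left]
    unfold ERPw
    rw [ERPcross_smul_left, ERPcross_smul_left, ERPcross_smul_left, ERPcross_self]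
    ring
  · -- Realizes part 2
    intro j hj h
    have hjk' : j + 1 < k := hj
    have h2 := hrp j hjk'
    rw [h, ERPprimDet_self] at h2
    simp at h2
  · -- no folds at vertices
    intro i hfold j hjk'
    exact absurd rfl (hfold.2.2.1 i (le_of_lt hfold.2.1))
  · -- right polygonal vertices
    intro j hj1 hjk2
    have hjk2' : j < k := hjk2
    have hdir : ∀ i : ℕ, ERPγ s ℓ ((i+1:ℕ):ℝ) - ERPγ s ℓ ((i:ℕ):ℝ) = ℓ i • ERPw s i := by
      intro i
      rw [ERPγ_natCast, ERPγ_natCast, ERPA_succ, add_sub_cancel_left]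
    constructor
    · have h2 := hrp (j - 1) (by omega)
      rwa [Nat.sub_add_cancel hj1] at h2
    · show 0 < cross (ERPγ s ℓ ((j-1+1:ℕ):ℝ) - ERPγ s ℓ ((j-1:ℕ):ℝ))
        (ERPγ s ℓ ((j+1:ℕ):ℝ) - ERPγ s ℓ ((j:ℕ):ℝ))
      rw [hdir, hdir, ERPcross_smul_left, ERPcross_smul_right]
      have hc := hcrossw (j - 1) (by omega)
      rw [Nat.sub_add_cancel hj1] at hc
      rw [hc, mul_one]
      exact mul_pos (hlpos (j - 1)) (hlpos j)
  · -- embedded: far edges disjoint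
    intro j j' hjj' hj'k
    have hj'k2 : j' < k := hj'k
    apply Set.eq_empty_iff_forall_notMem.mpr
    intro p hp
    simp only [PLPathData.edge, Set.mem_inter_iff, Set.mem_image] at hp
    obtain ⟨⟨x, hxm, hgx⟩, ⟨x', hx'm, hgx'⟩⟩ := hp
    have hj1k : ((j:ℝ) + 1) ≤ (k:ℝ) := by
      have : ((j+1:ℕ):ℝ) ≤ (k:ℝ) := Nat.cast_le.mpr (by omega)
      push_cast at this; linarith
    have hj'1k : ((j':ℝ) + 1) ≤ (k:ℝ) := by
      have : ((j'+1:ℕ):ℝ) ≤ (k:ℝ) := Nat.cast_le.mpr (by omega)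
      push_cast at this; linarith
    have hxI : x ∈ Set.Icc (0:ℝ) (k:ℝ) :=
      ⟨le_trans (Nat.cast_nonneg j) hxm.1, le_trans hxm.2 hj1k⟩
    have hx'I : x' ∈ Set.Icc (0:ℝ) (k:ℝ) :=
      ⟨le_trans (Nat.cast_nonneg j') hx'm.1, le_trans hx'm.2 hj'1k⟩
    have hlt : x < x' := by
      have h1 : ((j+1:ℕ):ℝ) < ((j':ℕ):ℝ) := Nat.cast_lt.mpr hjj'
      push_cast at h1
      calc x ≤ (j:ℝ) + 1 := hxm.2
        _ < (j':ℝ) := h1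
        _ ≤ x' := hx'm.1
    exact hinj x hxI x' hx'I hlt (hgx.trans hgx'.symm)
  · -- embedded: consecutive edges meet at vertex
    intro j hj
    have hj2 : j + 1 < k := hj
    apply Set.eq_of_subset_of_subset
    · intro p hp
      simp only [PLPathData.edge, Set.mem_inter_iff, Set.mem_image] at hp
      obtain ⟨⟨x, hxm, hgx⟩, ⟨x', hx'm, hgx'⟩⟩ := hp
      have hcast1 : ((j+1:ℕ):ℝ) = (j:ℝ) + 1 := by push_cast; ring
      have hj2k : ((j:ℝ) + 2) ≤ (k:ℝ) := by
        have : ((j+2:ℕ):ℝ) ≤ (k:ℝ) := Nat.cast_le.mpr (by omega)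
        push_cast at this; linarith
      have hxI : x ∈ Set.Icc (0:ℝ) (k:ℝ) :=
        ⟨le_trans (Nat.cast_nonneg j) hxm.1, le_trans hxm.2 (by linarith)⟩
      have hx'I : x' ∈ Set.Icc (0:ℝ) (k:ℝ) := by
        refine ⟨le_trans (Nat.cast_nonneg (j+1)) hx'm.1, le_trans hx'm.2 ?_⟩
        rw [hcast1]; linarith
      have hxx' : x ≤ x' := by
        have h1 : x ≤ (j:ℝ) + 1 := hxm.2
        have h2 : (j:ℝ) + 1 ≤ x' := by rw [← hcast1]; exact hx'm.1
        linarith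
      rcases eq_or_lt_of_le hxx' with heq2 | hlt
      · have h2 : (j:ℝ) + 1 ≤ x' := by rw [← hcast1]; exact hx'm.1
        have hxval : x = (j:ℝ) + 1 := le_antisymm hxm.2 (by rw [heq2]; exact h2)
        rw [Set.mem_singleton_iff, ← hgx, hxval]
      · exact absurd (hgx.trans hgx'.symm) (hinj x hxI x' hx'I hlt)
    · intro p hp
      rw [Set.mem_singleton_iff] at hp
      subst hp
      have hcast1 : ((j+1:ℕ):ℝ) = (j:ℝ) + 1 := by push_cast; ring
      constructor
      · simp only [PLPathData.edge, Set.mem_image]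
        exact ⟨(j:ℝ) + 1, ⟨by linarith, le_rfl⟩, rfl⟩
      · simp only [PLPathData.edge, Set.mem_image]
        refine ⟨(j:ℝ) + 1, ⟨?_, ?_⟩, rfl⟩
        · rw [hcast1]
        · rw [hcast1]; linarith
  · -- embedded: no triple points
    intro x₁ x₂ x₃ h1 h2 h3 h12 h23 hcontra
    exact hinj x₁ h1 x₂ h2 h12 hcontra.1
  · -- initial point
    show ERPγ s ℓ (0:ℝ) = ((0:ℝ), (0:ℝ))
    have h := ERPγ_natCast s ℓ 0
    rw [Nat.cast_zero] at h
    rw [h]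
    unfold ERPA
    simp
    rfl
  · -- final point
    exact (ERPγ_natCast s ℓ k).trans hAk
  · -- monotone first edge
    intro x hxm x' hx'm hlt
    have hval : ∀ z : ℝ, z ∈ Set.Icc (0:ℝ) 1 → (ERPγ s ℓ z).1 = z * ℓ 0 := by
      intro z hz
      have h0le : ((0:ℕ):ℝ) ≤ z := by rw [Nat.cast_zero]; exact hz.1
      have h1le : z ≤ ((0:ℕ):ℝ) + 1 := by rw [Nat.cast_zero]; linarith [hz.2]
      rw [ERPγ_eq s ℓ 0 z h0le h1le, hw0]
      have hA0 : ERPA s ℓ 0 = 0 := by simp [ERPA]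
      rw [hA0, Nat.cast_zero, sub_zero, zero_add]
      rw [Prod.smul_fst, Prod.smul_fst]
      simp only [Prod.smul_mk, smul_eq_mul]
      ring
    rw [hval x hxm, hval x' hx'm]
    have := hlpos 0
    nlinarith
end
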